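/- arXiv:2603.25554 — 2 statements merged into one kernel-verified Lean document; each statement's English description precedes it below -/
import Mathlib

section
/- For any finite, connected, acyclic quiver Q and any integral weight σ ∈ ℤ^{Q₀}, the dimension of the weight-σ space of semi-invariants for the all-ones dimension vector equals the number of lattice points of the network flow polytope: dim_ℂ SI(Q,𝟏)_σ = |P_σ ∩ ℤ^{Q₁}|. -/
/-- A finite quiver: finite sets of vertices and arrows with tail and head maps. -/
structure FinQuiver where
  V : Type
  A : Type
  [instFinV : Fintype V]
  [instDecV : DecidableEq V]
  [instFinA : Fintype A]
  [instDecA : DecidableEq A]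
  t : A → V
  h : A → V

attribute [instance] FinQuiver.instFinV FinQuiver.instDecV FinQuiver.instFinA FinQuiver.instDecA

/-- Coerce an `ℕ`-valued function (dimension vector) to a `ℤ`-valued one. -/
def natToInt {X : Type} (α : X → ℕ) : X → ℤ := fun x => (α x : ℤ)

namespace FinQuiver

variable (Q : FinQuiver)

/-- `Q` has an oriented cycle. -/
def HasCycle : Prop :=
  ∃ k : ℕ, ∃ c : Fin (k + 1) → Q.A, ∀ i : Fin (k + 1), Q.h (c i) = Q.t (c (i + 1))

/-- `Q` is acyclic: it has no oriented cycles. -/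
def Acyclic : Prop := ¬ Q.HasCycle

/-- Two vertices are adjacent if some arrow joins them (in either direction). -/
def Adj (u v : Q.V) : Prop :=
  ∃ a : Q.A, (Q.t a = u ∧ Q.h a = v) ∨ (Q.t a = v ∧ Q.h a = u)

/-- `Q` is connected as an undirected graph. -/
def Connected : Prop := ∀ u v : Q.V, Relation.ReflTransGen Q.Adj u v

/-- The representation space `rep(Q, β)`. -/
def Rep (β : Q.V → ℕ) : Type :=
  ∀ a : Q.A, Matrix (Fin (β (Q.h a))) (Fin (β (Q.t a))) ℂ

/-- The group `GL(β) = ∏ₓ GL(β(x), ℂ)`. -/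
def GLb (β : Q.V → ℕ) : Type :=
  ∀ x : Q.V, (Matrix (Fin (β x)) (Fin (β x)) ℂ)ˣ

/-- The action of `g⁻¹ ∈ GL(β)` on `W ∈ rep(Q,β)`: `(g⁻¹ · W)ₐ = g_{ha}⁻¹ Wₐ g_{ta}`. -/
noncomputable def invAct {β : Q.V → ℕ} (g : Q.GLb β) (W : Q.Rep β) : Q.Rep β :=
  fun a => ((g (Q.h a))⁻¹).val * W a * (g (Q.t a)).val

/-- `f : rep(Q,β) → ℂ` is a polynomial function of the matrix entries. -/
def IsPolyFun {β : Q.V → ℕ} (f : Q.Rep β → ℂ) : Prop :=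
  ∃ P : MvPolynomial ((a : Q.A) × (Fin (β (Q.h a)) × Fin (β (Q.t a)))) ℂ,
    ∀ W : Q.Rep β, f W = MvPolynomial.eval (fun i => W i.1 i.2.1 i.2.2) P

/-- The character `∏ₓ det(gₓ)^{σ(x)}` of `GL(β)` attached to an integral weight `σ`. -/
noncomputable def detWeight {β : Q.V → ℕ} (σ : Q.V → ℤ) (g : Q.GLb β) : ℂ :=
  ∏ x : Q.V, (Matrix.det (g x).val) ^ (σ x)

/-- The space `SI(Q,β)_σ` of semi-invariants of weight `σ`: polynomial functions `f` on
`rep(Q,β)` with `f(g⁻¹ · W) = (∏ₓ det(gₓ)^{σ(x)}) f(W)` for all `g ∈ GL(β)`. -/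
noncomputable def SIw (β : Q.V → ℕ) (σ : Q.V → ℤ) : Submodule ℂ (Q.Rep β → ℂ) where
  carrier := {f | Q.IsPolyFun f ∧
    ∀ (g : Q.GLb β) (W : Q.Rep β), f (Q.invAct g W) = Q.detWeight σ g * f W}
  add_mem' := by
    rintro f₁ f₂ ⟨⟨P₁, hP₁⟩, h₁⟩ ⟨⟨P₂, hP₂⟩, h₂⟩
    refine ⟨⟨P₁ + P₂, fun W => ?_⟩, fun g W => ?_⟩
    · simp [Pi.add_apply, hP₁ W, hP₂ W]
    · simp only [Pi.add_apply, h₁ g W, h₂ g W]; ring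
  zero_mem' := by
    refine ⟨⟨0, fun W => ?_⟩, fun g W => ?_⟩ <;> simp
  smul_mem' := by
    rintro c f ⟨⟨P, hP⟩, hf⟩
    refine ⟨⟨MvPolynomial.C c * P, fun W => ?_⟩, fun g W => ?_⟩
    · simp [Pi.smul_apply, hP W, smul_eq_mul]
    · simp only [Pi.smul_apply, hf g W, smul_eq_mul]; ring

/-- The dimension of the weight space of semi-invariants `SI(Q,β)_σ`. -/
noncomputable def siDim (β : Q.V → ℕ) (σ : Q.V → ℤ) : ℕ :=
  Module.finrank ℂ (Q.SIw β σ)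

/-- The Euler (Ringel) form of `Q`. -/
def euler (α γ : Q.V → ℤ) : ℤ :=
  (∑ x : Q.V, α x * γ x) - ∑ a : Q.A, α (Q.t a) * γ (Q.h a)

/-- The weight `⟨α, ·⟩ : x ↦ ⟨α, eₓ⟩` attached to a dimension vector `α`. -/
def weightOf (α : Q.V → ℕ) : Q.V → ℤ :=
  fun x => (α x : ℤ) - ∑ a : Q.A, (if Q.h a = x then (α (Q.t a) : ℤ) else 0)

/-- `(α ∘ β)_Q := dim SI(Q,β)_{⟨α,·⟩}`. -/
noncomputable def circ (α β : Q.V → ℕ) : ℕ := Q.siDim β (Q.weightOf α)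

/-- `φ` is a morphism of representations `V → W`. -/
def IsHom {α γ : Q.V → ℕ} (V : Q.Rep α) (W : Q.Rep γ)
    (φ : ∀ x : Q.V, Matrix (Fin (γ x)) (Fin (α x)) ℂ) : Prop :=
  ∀ a : Q.A, φ (Q.h a) * V a = W a * φ (Q.t a)

/-- The space `Hom_Q(V, W)` of morphisms of representations. -/
noncomputable def homSpace {α γ : Q.V → ℕ} (V : Q.Rep α) (W : Q.Rep γ) :
    Submodule ℂ (∀ x : Q.V, Matrix (Fin (γ x)) (Fin (α x)) ℂ) where
  carrier := {φ | Q.IsHom V W φ}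
  add_mem' := by
    intro φ ψ hφ hψ a
    simp only [Pi.add_apply, Matrix.add_mul, Matrix.mul_add, hφ a, hψ a]
  zero_mem' := by
    intro a
    simp
  smul_mem' := by
    intro c φ hφ a
    simp only [Pi.smul_apply, Matrix.smul_mul, Matrix.mul_smul, hφ a]

/-- A representation is Schur if its endomorphism algebra is one-dimensional. -/
def IsSchur {α : Q.V → ℕ} (V : Q.Rep α) : Prop :=
  Module.finrank ℂ (Q.homSpace V V) = 1

/-- A quiver exceptional sequence of dimension vectors. -/
def IsExcSeq {Nn : ℕ} (ε : Fin Nn → (Q.V → ℕ)) : Prop :=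
  (∀ i, Q.euler (natToInt (ε i)) (natToInt (ε i)) = 1 ∧ ∃ V : Q.Rep (ε i), Q.IsSchur V) ∧
  ∀ i j : Fin Nn, i < j →
    Q.euler (natToInt (ε i)) (natToInt (ε j)) ≤ 0 ∧ Q.circ (ε j) (ε i) ≠ 0

/-- The quiver `Q(ℰ)` attached to a sequence `ℰ = (ε₁,…,ε_N)` of dimension vectors:
vertices `1,…,N` and `−⟨εᵢ, εⱼ⟩` arrows from `i` to `j` for `i ≠ j`. -/
def quiverOfSeq {Nn : ℕ} (ε : Fin Nn → (Q.V → ℕ)) : FinQuiver where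
  V := Fin Nn
  A := (i : Fin Nn) × (j : Fin Nn) ×
        Fin (if i = j then 0 else (-(Q.euler (natToInt (ε i)) (natToInt (ε j)))).toNat)
  t := fun a => a.1
  h := fun a => a.2.1

end FinQuiver

/-- An isomorphism of quivers. -/
structure QuiverIso (Q₁ Q₂ : FinQuiver) where
  vEquiv : Q₁.V ≃ Q₂.V
  aEquiv : Q₁.A ≃ Q₂.A
  t_comm : ∀ a : Q₁.A, Q₂.t (aEquiv a) = vEquiv (Q₁.t a)
  h_comm : ∀ a : Q₁.A, Q₂.h (aEquiv a) = vEquiv (Q₁.h a)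

/-- The `p`-complete bipartite quiver `Q^p_{m,n}`: sources `x₁,…,x_m`, sinks `y₁,…,y_n`,
and `p` arrows from each `xᵢ` to each `yⱼ`. -/
def Qpmn (m n p : ℕ) : FinQuiver where
  V := Fin m ⊕ Fin n
  A := Fin m × Fin n × Fin p
  t := fun a => Sum.inl a.1
  h := fun a => Sum.inr a.2.1

/-- The number `T_{a,b}` of 3-way contingency tables of size `m × n × p` with the two
plane-sum margins fixed by `a` and `b`. -/
noncomputable def numTables (m n p : ℕ) (a : Fin m → ℕ) (b : Fin n → ℕ) : ℕ :=
  Nat.card {x : Fin m × Fin n × Fin p → ℕ //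
    (∀ i : Fin m, ∑ j : Fin n, ∑ k : Fin p, x (i, j, k) = a i) ∧
    (∀ j : Fin n, ∑ i : Fin m, ∑ k : Fin p, x (i, j, k) = b j)}

/-- The weight `θ_{a,b}` of `Q^p_{m,n}`. -/
def thetaAB {m n : ℕ} (a : Fin m → ℕ) (b : Fin n → ℕ) : Fin m ⊕ Fin n → ℤ :=
  Sum.elim (fun i => (a i : ℤ)) (fun j => -(b j : ℤ))

/-!
For `β = 𝟏` the representation space is `ℂ^{Q₁}` and `GL(𝟏)` is the torus `(ℂˣ)^{Q₀}`, acting on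
the coordinate of an arrow `a` by `t_{ta} / t_{ha}`. A monomial `∏ xₐ^{mₐ}` is therefore an
eigenvector whose character is `∏ᵥ tᵥ^{σ(v)}` with `σ` the net outflow of the flow `m`, and
characters with distinct exponents are distinct. Comparing coefficients, a polynomial is a
semi-invariant of weight `σ` exactly when it is weighted homogeneous of degree `σ` for the grading
`deg xₐ = e_{ta} - e_{ha}`, so the monomials indexed by the `ℕ`-valued flows with net outflow `σ`,
i.e. by the lattice points of `P_σ`, form a basis of `SI(Q,𝟏)_σ`.
-/

open MvPolynomial Finsupp

section ScaleVars

variable {R ι : Type*} [CommSemiring R]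

noncomputable def scaleVars (c : ι → R) : MvPolynomial ι R →ₐ[R] MvPolynomial ι R :=
  aeval fun i => C (c i) * X i

lemma eval_scaleVars (c x : ι → R) (P : MvPolynomial ι R) :
    eval x (scaleVars c P) = eval (fun i => c i * x i) P := by
  change ((aeval x).comp (aeval fun i => C (c i) * X i)) P = aeval (fun i => c i * x i) P
  rw [comp_aeval]
  simp

lemma coeff_scaleVars (c : ι → R) (m : ι →₀ ℕ) (P : MvPolynomial ι R) :
    coeff m (scaleVars c P) = (m.prod fun i k => c i ^ k) * coeff m P := by
  classical
  induction P using MvPolynomial.induction_on' with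
  | monomial n a =>
    have hmonomial : scaleVars c (monomial n a) = monomial n (a * n.prod fun i k => c i ^ k) := by
      rw [scaleVars, aeval_monomial, monomial_eq, map_mul, map_finsuppProd]
      simp only [mul_pow, Finsupp.prod_mul, map_pow, algebraMap_eq, mul_assoc]
    rw [hmonomial, coeff_monomial, coeff_monomial]
    split_ifs with h
    · subst h
      ring
    · simp
  | add P₁ P₂ h₁ h₂ => simp only [map_add, coeff_add, h₁, h₂, mul_add]

end ScaleVars

lemma forall_eval_mul_eq_mul_eval_iff {R ι : Type*} [CommRing R] [IsDomain R] [Infinite R]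
    (c : ι → R) (a : R) (P : MvPolynomial ι R) :
    (∀ x, eval (fun i => c i * x i) P = a * eval x P) ↔
      ∀ m, (m.prod fun i k => c i ^ k) * coeff m P = a * coeff m P := by
  have hpoly : (∀ x, eval (fun i => c i * x i) P = a * eval x P) ↔ scaleVars c P = C a * P := by
    rw [MvPolynomial.funext_iff]
    simp [eval_scaleVars]
  rw [hpoly, MvPolynomial.ext_iff]
  simp [coeff_scaleVars, coeff_C_mul]

section TorusChar

variable {K ι V : Type*} [Field K] [Fintype V]

def torusChar (d : V → ℤ) (t : V → Kˣ) : Kˣ := ∏ v, t v ^ d v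

@[simp] lemma torusChar_zero (t : V → Kˣ) : torusChar 0 t = 1 := by
  simp [torusChar]

lemma torusChar_add (d e : V → ℤ) (t : V → Kˣ) :
    torusChar (d + e) t = torusChar d t * torusChar e t := by
  simp only [torusChar, Pi.add_apply, zpow_add, Finset.prod_mul_distrib]

lemma torusChar_sub (d e : V → ℤ) (t : V → Kˣ) :
    torusChar (d - e) t = torusChar d t / torusChar e t := by
  rw [torusChar, torusChar, torusChar, ← Finset.prod_div_distrib]
  simp only [Pi.sub_apply, zpow_sub, div_eq_mul_inv]

lemma torusChar_nsmul (k : ℕ) (d : V → ℤ) (t : V → Kˣ) :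
    torusChar (k • d) t = torusChar d t ^ k := by
  simp only [torusChar, Pi.smul_apply, nsmul_eq_mul, zpow_mul', zpow_natCast, Finset.prod_pow]

lemma torusChar_single [DecidableEq V] (v : V) (n : ℤ) (t : V → Kˣ) :
    torusChar (Pi.single v n) t = t v ^ n := by
  rw [torusChar, Finset.prod_eq_single v (fun u _ hu => by simp [hu]) (by simp)]
  simp

lemma torusChar_mulSingle [DecidableEq V] (d : V → ℤ) (v : V) (u : Kˣ) :
    torusChar d (Pi.mulSingle v u) = u ^ d v := by
  rw [torusChar, Finset.prod_eq_single v (fun x _ hx => by simp [hx]) (by simp)]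
  simp

lemma torusChar_weight (w : ι → V → ℤ) (m : ι →₀ ℕ) (t : V → Kˣ) :
    torusChar (weight w m) t = m.prod fun i k => torusChar (w i) t ^ k := by
  induction m using Finsupp.induction with
  | zero => simp
  | single_add i k m _ _ ih =>
    rw [map_add, torusChar_add, ih, weight_single, torusChar_nsmul,
      Finsupp.prod_add_index' (by simp) (fun _ _ _ => pow_add _ _ _),
      Finsupp.prod_single_index (by simp)]

lemma torusChar_injective [CharZero K] :
    Function.Injective (torusChar : (V → ℤ) → (V → Kˣ) → Kˣ) := by
  classical
  intro d e hde
  funext v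
  have h := congrArg Units.val (congrFun hde (Pi.mulSingle v (Units.mk0 2 two_ne_zero)))
  rw [torusChar_mulSingle, torusChar_mulSingle, Units.val_zpow_eq_zpow_val,
    Units.val_zpow_eq_zpow_val, Units.val_mk0] at h
  have hq : (2 : ℚ) ^ d v = 2 ^ e v := Rat.cast_injective (α := K) (by push_cast; exact h)
  exact zpow_right_injective₀ (by norm_num) (by norm_num) hq

theorem isWeightedHomogeneous_iff_eval_torusChar [CharZero K] (w : ι → V → ℤ) (σ : V → ℤ)
    (P : MvPolynomial ι K) :
    P.IsWeightedHomogeneous w σ ↔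
      ∀ (t : V → Kˣ) (x : ι → K),
        eval (fun i => (torusChar (w i) t : K) * x i) P = torusChar σ t * eval x P := by
  have hprod : ∀ (t : V → Kˣ) (m : ι →₀ ℕ),
      (m.prod fun i k => (torusChar (w i) t : K) ^ k) = torusChar (weight w m) t := by
    intro t m
    simp [torusChar_weight, Finsupp.prod]
  simp only [forall_eval_mul_eq_mul_eval_iff, hprod]
  constructor
  · intro hP t m
    by_cases hm : coeff m P = 0
    · simp [hm]
    · rw [hP hm]
  · intro H m hm
    apply torusChar_injective (K := K)
    funext t
    exact Units.ext (mul_right_cancel₀ hm (H t m))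

end TorusChar

-- Both sides are `0` when the fiber of `weight w` is infinite.
lemma finrank_weightedHomogeneousSubmodule {R M ι : Type*} [CommRing R] [Nontrivial R]
    [AddCommMonoid M] (w : ι → M) (m : M) :
    Module.finrank R (weightedHomogeneousSubmodule R w m) =
      Nat.card {d : ι →₀ ℕ // weight w d = m} := by
  rw [weightedHomogeneousSubmodule_eq_finsupp_supported,
    (AddMonoidAlgebra.supportedEquivFinsupp _).finrank_eq, Module.finrank, rank_finsupp_self,
    Cardinal.toNat_lift]
  rfl

lemma natCast_floor_eq_self {x : ℝ} (h0 : 0 ≤ x) (hx : ∃ k : ℤ, x = k) :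
    (⌊x⌋₊ : ℝ) = x := by
  obtain ⟨k, rfl⟩ := hx
  lift k to ℕ using (by exact_mod_cast h0)
  simp

namespace FinQuiver

variable (Q : FinQuiver)

def arrowWeight (a : Q.A) : Q.V → ℤ := Pi.single (Q.t a) 1 - Pi.single (Q.h a) 1

def entries : Q.Rep (fun _ => 1) ≃ (Q.A → ℂ) :=
  Equiv.piCongrRight fun _ => Matrix.uniqueRingEquiv.toEquiv

def torusOfGL : Q.GLb (fun _ => 1) ≃ (Q.V → ℂˣ) :=
  Equiv.piCongrRight fun _ => (Units.mapEquiv Matrix.uniqueRingEquiv.toMulEquiv).toEquiv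

@[simp] lemma entries_apply (W : Q.Rep (fun _ => 1)) (a : Q.A) : Q.entries W a = W a 0 0 := rfl

@[simp] lemma val_torusOfGL_apply (g : Q.GLb (fun _ => 1)) (v : Q.V) :
    (Q.torusOfGL g v : ℂ) = (g v : Matrix (Fin 1) (Fin 1) ℂ) 0 0 := rfl

lemma val_inv_torusOfGL_apply (g : Q.GLb (fun _ => 1)) (v : Q.V) :
    (((Q.torusOfGL g v)⁻¹ : ℂˣ) : ℂ) = ((g v)⁻¹ : (Matrix (Fin 1) (Fin 1) ℂ)ˣ).val 0 0 :=
  rfl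

lemma detWeight_eq_torusChar (σ : Q.V → ℤ) (g : Q.GLb (fun _ => 1)) :
    Q.detWeight σ g = torusChar σ (Q.torusOfGL g) := by
  simp [detWeight, torusChar, Matrix.det_unique]

lemma entries_invAct (g : Q.GLb (fun _ => 1)) (W : Q.Rep (fun _ => 1)) :
    Q.entries (Q.invAct g W) =
      fun a => torusChar (Q.arrowWeight a) (Q.torusOfGL g) * Q.entries W a := by
  funext a
  simp only [arrowWeight, torusChar_sub, torusChar_single, zpow_one, div_eq_mul_inv,
    Units.val_mul, val_torusOfGL_apply, val_inv_torusOfGL_apply, entries_apply, invAct,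
    Matrix.mul_apply, Finset.univ_unique, Finset.sum_singleton, Fin.default_eq_zero]
  ring

noncomputable def evalEntries : MvPolynomial Q.A ℂ →ₗ[ℂ] (Q.Rep (fun _ => 1) → ℂ) :=
  LinearMap.pi fun W => (aeval (Q.entries W)).toLinearMap

@[simp] lemma evalEntries_apply (P : MvPolynomial Q.A ℂ) (W : Q.Rep (fun _ => 1)) :
    Q.evalEntries P W = eval (Q.entries W) P := rfl

lemma evalEntries_injective : Function.Injective Q.evalEntries := by
  rw [← LinearMap.ker_eq_bot, LinearMap.ker_eq_bot']
  intro P hP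
  refine MvPolynomial.funext fun x => ?_
  simpa using congrFun hP (Q.entries.symm x)

lemma isPolyFun_iff_mem_range (f : Q.Rep (fun _ => 1) → ℂ) :
    Q.IsPolyFun f ↔ f ∈ LinearMap.range Q.evalEntries := by
  constructor
  · rintro ⟨P, hP⟩
    refine ⟨rename Sigma.fst P, funext fun W => ?_⟩
    have hvars : Q.entries W ∘ Sigma.fst =
        fun i : (a : Q.A) × (Fin 1 × Fin 1) => W i.1 i.2.1 i.2.2 := by
      funext ⟨a, i, j⟩
      rw [Subsingleton.elim i 0, Subsingleton.elim j 0]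
      rfl
    rw [hP, evalEntries_apply, eval_rename, hvars]
  · rintro ⟨P, rfl⟩
    exact ⟨rename (fun a => ⟨a, 0, 0⟩) P, fun W => by rw [eval_rename]; rfl⟩

lemma isSemiInvariant_evalEntries_iff (σ : Q.V → ℤ) (P : MvPolynomial Q.A ℂ) :
    (∀ g W, Q.evalEntries P (Q.invAct g W) = Q.detWeight σ g * Q.evalEntries P W) ↔
      P.IsWeightedHomogeneous Q.arrowWeight σ := by
  rw [isWeightedHomogeneous_iff_eval_torusChar, ← Q.torusOfGL.forall_congr_right]
  refine forall_congr' fun g => ?_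
  rw [← Q.entries.forall_congr_right]
  refine forall_congr' fun W => ?_
  rw [evalEntries_apply, evalEntries_apply, entries_invAct, detWeight_eq_torusChar]

lemma SIw_one_eq_map (σ : Q.V → ℤ) :
    Q.SIw (fun _ => 1) σ =
      (weightedHomogeneousSubmodule ℂ Q.arrowWeight σ).map Q.evalEntries := by
  ext f
  rw [Submodule.mem_map]
  constructor
  · rintro ⟨hpoly, hsemi⟩
    obtain ⟨P, rfl⟩ := (Q.isPolyFun_iff_mem_range f).1 hpoly
    exact ⟨P, (Q.isSemiInvariant_evalEntries_iff σ P).1 hsemi, rfl⟩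
  · rintro ⟨P, hP, rfl⟩
    exact ⟨(Q.isPolyFun_iff_mem_range _).2 ⟨P, rfl⟩,
      (Q.isSemiInvariant_evalEntries_iff σ P).2 hP⟩

lemma siDim_one_eq_card (σ : Q.V → ℤ) :
    Q.siDim (fun _ => 1) σ = Nat.card {d : Q.A →₀ ℕ // weight Q.arrowWeight d = σ} := by
  rw [siDim, SIw_one_eq_map, ← finrank_weightedHomogeneousSubmodule (R := ℂ),
    (Submodule.equivMapOfInjective _ Q.evalEntries_injective _).finrank_eq]

def netOutflow {R : Type*} [AddCommGroup R] (x : Q.A → R) (v : Q.V) : R :=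
  (∑ a : Q.A, if Q.t a = v then x a else 0) - ∑ a : Q.A, if Q.h a = v then x a else 0

lemma map_netOutflow {R S : Type*} [AddCommGroup R] [AddCommGroup S] (f : R →+ S)
    (x : Q.A → R) (v : Q.V) : f (Q.netOutflow x v) = Q.netOutflow (fun a => f (x a)) v := by
  simp [netOutflow, map_sum, apply_ite f]

lemma weight_arrowWeight (d : Q.A →₀ ℕ) :
    weight Q.arrowWeight d = Q.netOutflow fun a => (d a : ℤ) := by
  funext v
  simp [weight_apply, Finsupp.sum_fintype, netOutflow, arrowWeight, Pi.single_apply, mul_sub,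
    Finset.sum_sub_distrib, eq_comm]

lemma weight_arrowWeight_eq_iff (d : Q.A →₀ ℕ) (σ : Q.V → ℤ) :
    weight Q.arrowWeight d = σ ↔ ∀ v, Q.netOutflow (fun a => (d a : ℝ)) v = σ v := by
  rw [weight_arrowWeight, funext_iff]
  refine forall_congr' fun v => ?_
  have hcast := Q.map_netOutflow (Int.castAddHom ℝ) (fun a => (d a : ℤ)) v
  simp only [Int.coe_castAddHom, Int.cast_natCast] at hcast
  rw [← Int.cast_inj (α := ℝ), hcast]

noncomputable def weightFiberEquivLatticePoints (σ : Q.V → ℤ) :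
    {d : Q.A →₀ ℕ // weight Q.arrowWeight d = σ} ≃
      {x : Q.A → ℝ //
        ((∀ a, 0 ≤ x a) ∧ ∀ v, Q.netOutflow x v = σ v) ∧ ∀ a, ∃ k : ℤ, x a = k} where
  toFun d := ⟨fun a => d.1 a, ⟨fun _ => Nat.cast_nonneg _, (Q.weight_arrowWeight_eq_iff d σ).1 d.2⟩,
    fun a => ⟨d.1 a, rfl⟩⟩
  invFun x := ⟨Finsupp.equivFunOnFinite.symm fun a => ⌊x.1 a⌋₊, by
    rw [weight_arrowWeight_eq_iff]
    simpa [natCast_floor_eq_self (x.2.1.1 _) (x.2.2 _)] using x.2.1.2⟩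
  left_inv d := by
    ext a
    simp
  right_inv x := by
    ext a
    exact natCast_floor_eq_self (x.2.1.1 a) (x.2.2 a)

end FinQuiver

theorem siDim_one_eq_card_lattice_points_flow_polytope_general
    (Q : FinQuiver) (σ : Q.V → ℤ) :
    Q.siDim (fun _ => 1) σ =
      Nat.card {x : Q.A → ℝ //
        ((∀ a : Q.A, 0 ≤ x a) ∧
          ∀ v : Q.V,
            ((∑ a : Q.A, if Q.t a = v then x a else 0) -
              ∑ a : Q.A, if Q.h a = v then x a else 0) = (σ v : ℝ)) ∧
        ∀ a : Q.A, ∃ k : ℤ, x a = (k : ℝ)} := by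
  rw [Q.siDim_one_eq_card]
  exact Nat.card_congr (Q.weightFiberEquivLatticePoints σ)

/-- For a finite, connected, acyclic quiver `Q` and any integral weight `σ`,
the dimension of `SI(Q, 𝟏)_σ` equals the number of lattice points of the network flow
polytope `P_σ`. -/
theorem siDim_one_eq_card_lattice_points_flow_polytope
    (Q : FinQuiver) (hconn : Q.Connected) (hacyc : Q.Acyclic) (σ : Q.V → ℤ) :
    Q.siDim (fun _ => 1) σ =
      Nat.card {x : Q.A → ℝ //
        ((∀ a : Q.A, 0 ≤ x a) ∧
          ∀ v : Q.V,
            ((∑ a : Q.A, if Q.t a = v then x a else 0) -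
              ∑ a : Q.A, if Q.h a = v then x a else 0) = (σ v : ℝ)) ∧
        ∀ a : Q.A, ∃ k : ℤ, x a = (k : ℝ)} :=
  siDim_one_eq_card_lattice_points_flow_polytope_general Q σ
end

section
/- Let Q be a finite, connected, acyclic quiver and let v₀ ∈ Q₀ be a vertex whose incident arrows are exactly ℓ incoming arrows a₁ : v₁ → v₀, …, a_ℓ : v_ℓ → v₀ and one outgoing arrow b : v₀ → w. Suppose β is a dimension vector and σ is an integral weight with β(v₀) ≥ β(w) and σ(v₀) = 0. Let Q̄ be the quiver with vertex set Q₀ \ {v₀} and arrow set (Q₁ \ {b, a₁, …, a_ℓ}) ∪ {b a₁, …, b a_ℓ}, where b a_i is a new arrow v_i → w, and let β̄ and σ̄ be the restrictions of β and σ to Q̄. Then SI(Q,β)_σ ≅ SI(Q̄,β̄)_{σ̄} as ℂ-vector spaces. -/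
/-- The quiver `Q̄` obtained from `Q` by removing the vertex `v₀`, whose unique outgoing
arrow is `b : v₀ → w`, and replacing each incoming arrow `aᵢ : vᵢ → v₀` by the composite
arrow `b aᵢ : vᵢ → w`. -/
def FinQuiver.removeVertex (Q : FinQuiver) (v₀ w : Q.V) (b : Q.A)
    (hw : w ≠ v₀) (huniq : ∀ c : Q.A, Q.t c = v₀ → c = b) : FinQuiver where
  V := {x : Q.V // x ≠ v₀}
  A := {c : Q.A // c ≠ b}
  t := fun c => ⟨Q.t c.val, fun hc => c.property (huniq c.val hc)⟩
  h := fun c => if hc : Q.h c.val = v₀ then ⟨w, hw⟩ else ⟨Q.h c.val, hc⟩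

/-!
Composing with `b` gives a polynomial, `GL`-equivariant map `contract : rep(Q,β) → rep(Q̄,β̄)`.
As `β(w) ≤ β(v₀)`, there are matrices `E : β(v₀) → β(w)` and `F : β(w) → β(v₀)` with `E F = 1`,
and `expand : rep(Q̄,β̄) → rep(Q,β)` sends `X` to `b ↦ E`, `a ↦ F X_{ba}` for the arrows `a` into
`v₀`. Then `contract ∘ expand = id`, so precomposition with the two maps identifies the
semi-invariants as soon as `f ∘ expand ∘ contract = f` for every `f ∈ SI(Q,β)_σ`.

Because `σ(v₀) = 0`, such an `f` is invariant under `GL(β(v₀))`. If `W_b F` is invertible, some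
`g ∈ GL(β(v₀))` moves `W_b` to `E`. With `p = F E`, the elements `p + t⁻¹ (1 - p)` (`t ≠ 0`) of
`GL(β(v₀))` fix `W_b = E` and multiply the arrows into `v₀` by `p + t (1 - p)`; at `t = 0` this
gives `expand (contract W)`, and continuity of `f` yields `f (expand (contract W)) = f W`.
Finally `det (W_b F)` is a nonzero polynomial, so an identity of polynomial functions that holds
where it does not vanish holds everywhere.
-/

open Matrix

theorem IsIdempotentElem.add_smul_one_sub_mul {K A : Type*} [CommRing K] [Ring A] [Algebra K A]
    {p : A} (hp : IsIdempotentElem p) (s t : K) :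
    (p + s • (1 - p)) * (p + t • (1 - p)) = p + (s * t) • (1 - p) := by
  simp only [mul_add, add_mul, smul_mul_assoc, mul_smul_comm, hp.eq, hp.mul_one_sub_self,
    hp.one_sub_mul_self, hp.one_sub.eq, smul_zero, smul_smul, add_zero, zero_add, mul_comm t]

theorem Matrix.exists_mul_units_eq {m n R : Type*} [Fintype m] [Fintype n] [DecidableEq m]
    [DecidableEq n] [CommRing R] {E B : Matrix m n R} {F : Matrix n m R} (hEF : E * F = 1)
    (hB : IsUnit (B * F).det) : ∃ u : (Matrix n n R)ˣ, B * (u : Matrix n n R) = E := by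
  have hv : IsUnit (1 + F * (B - E)) := by
    rwa [Matrix.isUnit_iff_isUnit_det, det_one_add_mul_comm, Matrix.sub_mul, hEF,
      add_sub_cancel]
  have hEv : E * (1 + F * (B - E)) = B := by
    rw [Matrix.mul_add, Matrix.mul_one, ← Matrix.mul_assoc, hEF, Matrix.one_mul, add_sub_cancel]
  refine ⟨hv.unit⁻¹, ?_⟩
  calc B * (↑(hv.unit⁻¹) : Matrix n n R)
        = E * (hv.unit : Matrix n n R) * (↑(hv.unit⁻¹) : Matrix n n R) := by
          rw [hv.unit_spec, hEv]
    _ = E := by rw [Matrix.mul_assoc, Units.mul_inv, Matrix.mul_one]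

namespace Matrix

variable {R V : Type*} (β : V → ℕ) {n : Type*}

def castRows {x y : V} (e : x = y) (M : Matrix (Fin (β x)) n R) :
    Matrix (Fin (β y)) n R :=
  M.submatrix (Fin.cast (congrArg β e.symm)) id

@[simp] theorem castRows_rfl {x : V} (M : Matrix (Fin (β x)) n R) : castRows β rfl M = M := rfl

@[simp] theorem castRows_castRows {x y z : V} (e : x = y) (e' : y = z)
    (M : Matrix (Fin (β x)) n R) :
    castRows β e' (castRows β e M) = castRows β (e.trans e') M := by
  subst e e'
  rfl

theorem castRows_conj [Mul R] [AddCommMonoid R] (A : ∀ x, Matrix (Fin (β x)) (Fin (β x)) R)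
    {x y : V} (e : x = y) {m : ℕ} (M : Matrix (Fin (β x)) (Fin m) R)
    (B : Matrix (Fin m) (Fin m) R) :
    castRows β e (A x * M * B) = A y * castRows β e M * B := by
  subst e
  rfl

end Matrix

namespace FinQuiver

section PolynomialFunctions

variable {Q : FinQuiver} {β : Q.V → ℕ}

theorem mem_SIw {σ : Q.V → ℤ} {f : Q.Rep β → ℂ} :
    f ∈ Q.SIw β σ ↔ Q.IsPolyFun f ∧
      ∀ (g : Q.GLb β) (W : Q.Rep β), f (Q.invAct g W) = Q.detWeight σ g * f W :=
  Iff.rfl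

theorem isPolyFun_const (c : ℂ) : Q.IsPolyFun fun _ : Q.Rep β => c :=
  ⟨MvPolynomial.C c, fun _ => by simp⟩

theorem isPolyFun_apply (a : Q.A) (i : Fin (β (Q.h a))) (j : Fin (β (Q.t a))) :
    Q.IsPolyFun fun W : Q.Rep β => W a i j :=
  ⟨MvPolynomial.X ⟨a, i, j⟩, fun _ => by simp⟩

theorem IsPolyFun.mul {f g : Q.Rep β → ℂ} (hf : Q.IsPolyFun f) (hg : Q.IsPolyFun g) :
    Q.IsPolyFun fun W => f W * g W := by
  obtain ⟨P, hP⟩ := hf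
  obtain ⟨R, hR⟩ := hg
  exact ⟨P * R, fun W => by simp [hP, hR]⟩

theorem IsPolyFun.sum {ι : Type*} [Fintype ι] {f : ι → Q.Rep β → ℂ}
    (hf : ∀ k, Q.IsPolyFun (f k)) : Q.IsPolyFun fun W => ∑ k, f k W := by
  choose P hP using hf
  exact ⟨∑ k, P k, fun W => by simp [hP]⟩

theorem IsPolyFun.det {n : Type*} [Fintype n] [DecidableEq n] {M : Q.Rep β → Matrix n n ℂ}
    (hM : ∀ i j, Q.IsPolyFun fun W => M W i j) : Q.IsPolyFun fun W => (M W).det := by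
  choose P hP using hM
  refine ⟨(Matrix.of P).det, fun W => ?_⟩
  rw [RingHom.map_det]
  exact congrArg Matrix.det (Matrix.ext fun i j => by simp [hP])

theorem IsPolyFun.comp {Q' : FinQuiver} {β' : Q'.V → ℕ} {f : Q'.Rep β' → ℂ}
    (hf : Q'.IsPolyFun f) {Φ : Q.Rep β → Q'.Rep β'}
    (hΦ : ∀ a i j, Q.IsPolyFun fun W => Φ W a i j) : Q.IsPolyFun (f ∘ Φ) := by
  obtain ⟨P, hP⟩ := hf
  choose p hp using hΦ
  refine ⟨MvPolynomial.bind₁ (fun k => p k.1 k.2.1 k.2.2) P, fun W => ?_⟩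
  refine (hP (Φ W)).trans ((MvPolynomial.eval₂Hom_bind₁ (RingHom.id ℂ) _ _ P).trans ?_).symm
  exact congrArg (fun x => MvPolynomial.eval x P) (funext fun k => (hp _ _ _ W).symm)

theorem IsPolyFun.continuous_comp {f : Q.Rep β → ℂ} (hf : Q.IsPolyFun f) {X : Type*}
    [TopologicalSpace X] {γ : X → Q.Rep β} (hγ : ∀ a i j, Continuous fun x => γ x a i j) :
    Continuous (f ∘ γ) := by
  obtain ⟨P, hP⟩ := hf
  rw [show f ∘ γ = _ from funext fun x => hP (γ x)]
  exact (MvPolynomial.continuous_eval P).comp (continuous_pi fun k => hγ _ _ _)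

theorem IsPolyFun.apply_zero_eq_of_forall_ne_zero {f : Q.Rep β → ℂ} (hf : Q.IsPolyFun f)
    {γ : ℂ → Q.Rep β} (hγ : ∀ a i j, Continuous fun t => γ t a i j) {c : ℂ}
    (h : ∀ t, t ≠ 0 → f (γ t) = c) : f (γ 0) = c :=
  congrFun (Continuous.ext_on (dense_compl_singleton 0) (hf.continuous_comp hγ)
    continuous_const h) 0

theorem IsPolyFun.eq_of_forall_ne_zero {f g d : Q.Rep β → ℂ} (hf : Q.IsPolyFun f)
    (hg : Q.IsPolyFun g) (hd : Q.IsPolyFun d) {W₀ : Q.Rep β} (hW₀ : d W₀ ≠ 0)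
    (h : ∀ W, d W ≠ 0 → f W = g W) : f = g := by
  obtain ⟨P, hP⟩ := hf
  obtain ⟨R, hR⟩ := hg
  obtain ⟨D, hD⟩ := hd
  have hDPR : D * (P - R) = 0 := MvPolynomial.funext fun x => by
    obtain ⟨W, rfl⟩ : ∃ W : Q.Rep β, (fun k => W k.1 k.2.1 k.2.2) = x :=
      ⟨fun a i j => x ⟨a, i, j⟩, rfl⟩
    by_cases hW : d W = 0
    · simp [← hD W, hW]
    · simp [← hP W, ← hR W, h W hW]
  have hD0 : D ≠ 0 := by
    rintro rfl
    exact hW₀ (by simp [hD])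
  funext W
  rw [hP, hR, sub_eq_zero.1 ((mul_eq_zero.1 hDPR).resolve_left hD0)]

end PolynomialFunctions

section VertexAction

variable {Q : FinQuiver} {β : Q.V → ℕ}

def unitAt (v : Q.V) (u : (Matrix (Fin (β v)) (Fin (β v)) ℂ)ˣ) : Q.GLb β :=
  Function.update (fun _ => 1) v u

def leftMulAt (v : Q.V) (M : Matrix (Fin (β v)) (Fin (β v)) ℂ) (W : Q.Rep β) : Q.Rep β :=
  fun a => Function.update (fun x => (1 : Matrix (Fin (β x)) (Fin (β x)) ℂ)) v M (Q.h a) * W a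

theorem unitAt_inv_val (v : Q.V) (u : (Matrix (Fin (β v)) (Fin (β v)) ℂ)ˣ) (x : Q.V) :
    ((unitAt v u x)⁻¹ : (Matrix (Fin (β x)) (Fin (β x)) ℂ)ˣ).val =
      Function.update (fun x => (1 : Matrix (Fin (β x)) (Fin (β x)) ℂ)) v ↑(u⁻¹) x :=
  (Function.apply_update (fun x (g : (Matrix (Fin (β x)) (Fin (β x)) ℂ)ˣ) => (g⁻¹).val)
    _ v u x).trans (by congr)

theorem detWeight_unitAt (σ : Q.V → ℤ) (v : Q.V)
    (u : (Matrix (Fin (β v)) (Fin (β v)) ℂ)ˣ) :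
    Q.detWeight σ (unitAt v u) = (u : Matrix (Fin (β v)) (Fin (β v)) ℂ).det ^ σ v := by
  rw [detWeight, Fintype.prod_eq_single v fun x hx => by simp [unitAt, hx]]
  simp [unitAt]

theorem invAct_one (W : Q.Rep β) : Q.invAct (fun _ => 1) W = W := by
  funext a
  simp [invAct]

theorem continuous_leftMulAt_apply (v : Q.V) (W : Q.Rep β) (a : Q.A) (i : Fin (β (Q.h a)))
    (j : Fin (β (Q.t a))) : Continuous fun M => leftMulAt v M W a i j := by
  have hupdate : Continuous fun M : Matrix (Fin (β v)) (Fin (β v)) ℂ =>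
      Function.update (fun x => (1 : Matrix (Fin (β x)) (Fin (β x)) ℂ)) v M :=
    continuous_const.update v continuous_id
  exact (((continuous_apply (Q.h a)).comp hupdate).matrix_mul continuous_const).matrix_elem i j

end VertexAction

theorem removeVertex_h_of_eq {Q : FinQuiver} {v₀ w : Q.V} {b : Q.A} {hw : w ≠ v₀}
    {huniq : ∀ c : Q.A, Q.t c = v₀ → c = b} {c : (Q.removeVertex v₀ w b hw huniq).A}
    (hc : Q.h c.1 = v₀) : ((Q.removeVertex v₀ w b hw huniq).h c).1 = w := by
  simp [removeVertex, hc]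

theorem removeVertex_h_of_ne {Q : FinQuiver} {v₀ w : Q.V} {b : Q.A} {hw : w ≠ v₀}
    {huniq : ∀ c : Q.A, Q.t c = v₀ → c = b} {c : (Q.removeVertex v₀ w b hw huniq).A}
    (hc : Q.h c.1 ≠ v₀) : ((Q.removeVertex v₀ w b hw huniq).h c).1 = Q.h c.1 := by
  simp [removeVertex, hc]

section RemoveVertex

variable {Q : FinQuiver} {β : Q.V → ℕ} {σ : Q.V → ℤ} (b : Q.A)

theorem invAct_unitAt_of_mul_eq (hw : Q.h b ≠ Q.t b)
    (huniq : ∀ c : Q.A, Q.t c = Q.t b → c = b)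
    {u : (Matrix (Fin (β (Q.t b))) (Fin (β (Q.t b))) ℂ)ˣ} {W : Q.Rep β}
    (hW : W b * (u : Matrix (Fin (β (Q.t b))) (Fin (β (Q.t b))) ℂ) = W b) :
    Q.invAct (unitAt (Q.t b) u) W = leftMulAt (Q.t b) ↑(u⁻¹) W := by
  funext a
  simp only [invAct, leftMulAt, unitAt_inv_val]
  by_cases hab : a = b
  · subst hab
    simp [unitAt, Matrix.mul_assoc, hW]
  · have hta : Q.t a ≠ Q.t b := fun h => hab (huniq a h)
    simp [unitAt, hta]

theorem apply_leftMulAt_of_isIdempotentElem (hw : Q.h b ≠ Q.t b)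
    (huniq : ∀ c : Q.A, Q.t c = Q.t b → c = b) (hσ : σ (Q.t b) = 0) {f : Q.Rep β → ℂ}
    (hf : f ∈ Q.SIw β σ) {p : Matrix (Fin (β (Q.t b))) (Fin (β (Q.t b))) ℂ}
    (hp : IsIdempotentElem p) {W : Q.Rep β} (hW : W b * p = W b) :
    f (leftMulAt (Q.t b) p W) = f W := by
  have hWp : ∀ s : ℂ, W b * (p + s • (1 - p)) = W b := fun s => by
    rw [Matrix.mul_add, Matrix.mul_smul, Matrix.mul_sub, Matrix.mul_one, hW, sub_self,
      smul_zero, add_zero]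
  -- for `t ≠ 0` this is the action of an element of `GL(β(t b))` that fixes `W b`
  have hline : ∀ t : ℂ, t ≠ 0 → f (leftMulAt (Q.t b) (p + t • (1 - p)) W) = f W := by
    intro t ht
    let u : (Matrix (Fin (β (Q.t b))) (Fin (β (Q.t b))) ℂ)ˣ :=
      ⟨p + t⁻¹ • (1 - p), p + t • (1 - p),
        by rw [hp.add_smul_one_sub_mul, inv_mul_cancel₀ ht, one_smul, add_sub_cancel],
        by rw [hp.add_smul_one_sub_mul, mul_inv_cancel₀ ht, one_smul, add_sub_cancel]⟩
    rw [show p + t • (1 - p) = ↑(u⁻¹) from rfl,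
      ← invAct_unitAt_of_mul_eq b hw huniq (hWp _), (mem_SIw.1 hf).2, detWeight_unitAt, hσ,
      zpow_zero, one_mul]
  simpa using (mem_SIw.1 hf).1.apply_zero_eq_of_forall_ne_zero
    (fun a i j => (continuous_leftMulAt_apply _ W a i j).comp
      (continuous_const.add (continuous_id.smul continuous_const))) hline

-- The vertices `v₀` and `w` of the paper are `Q.t b` and `Q.h b`.
variable (hw : Q.h b ≠ Q.t b) (huniq : ∀ c : Q.A, Q.t c = Q.t b → c = b)
  (E : Matrix (Fin (β (Q.h b))) (Fin (β (Q.t b))) ℂ)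
  (F : Matrix (Fin (β (Q.t b))) (Fin (β (Q.h b))) ℂ)

local notation "Q̄" => Q.removeVertex (Q.t b) (Q.h b) b hw huniq

def restrictGL (g : Q.GLb β) : Q̄.GLb (fun x => β x.val) := fun x => g x.1

def extendGL (g : Q̄.GLb (fun x => β x.val)) : Q.GLb β :=
  fun x => if hx : x = Q.t b then 1 else g ⟨x, hx⟩

theorem restrictGL_extendGL (g : Q̄.GLb (fun x => β x.val)) :
    restrictGL b hw huniq (extendGL b hw huniq g) = g :=
  funext fun x => dif_neg x.2

theorem restrictGL_unitAt (u : (Matrix (Fin (β (Q.t b))) (Fin (β (Q.t b))) ℂ)ˣ) :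
    restrictGL b hw huniq (unitAt (Q.t b) u) = fun _ => 1 :=
  funext fun x => by
    show unitAt (Q.t b) u x.1 = 1
    exact Function.update_of_ne x.2 _ _

theorem detWeight_restrictGL (hσ : σ (Q.t b) = 0) (g : Q.GLb β) :
    Q̄.detWeight (fun x => σ x.val) (restrictGL b hw huniq g) = Q.detWeight σ g := by
  rw [detWeight, detWeight, Fintype.prod_eq_mul_prod_subtype_ne _ (Q.t b), hσ, zpow_zero,
    one_mul]
  rfl

def contract (W : Q.Rep β) : Q̄.Rep (fun x => β x.val) := fun c =>
  if hc : Q.h c.1 = Q.t b then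
    castRows β (removeVertex_h_of_eq hc).symm (W b * castRows β hc (W c.1))
  else castRows β (removeVertex_h_of_ne hc).symm (W c.1)

def expand (X : Q̄.Rep (fun x => β x.val)) : Q.Rep β := fun a =>
  if hab : a = b then hab ▸ E
  else if ha : Q.h a = Q.t b then
    castRows β ha.symm
      (F * castRows β (removeVertex_h_of_eq (c := ⟨a, hab⟩) ha) (X ⟨a, hab⟩))
  else castRows β (removeVertex_h_of_ne (c := ⟨a, hab⟩) ha) (X ⟨a, hab⟩)

theorem expand_self (X : Q̄.Rep (fun x => β x.val)) : expand b hw huniq E F X b = E := by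
  simp [expand]

theorem contract_expand (hEF : E * F = 1) (X : Q̄.Rep (fun x => β x.val)) :
    contract b hw huniq (expand b hw huniq E F X) = X := by
  funext c
  have hcb : c.1 ≠ b := c.2
  by_cases hc : Q.h c.1 = Q.t b
  · simp only [contract, expand, hc, hcb, dif_pos, dif_neg, not_false_eq_true]
    -- `erw`: the column types `Fin (β (Q̄.t c))` and `Fin (β (Q.t c))` agree only after
    -- unfolding `removeVertex`
    erw [castRows_castRows, castRows_rfl, ← Matrix.mul_assoc, hEF, Matrix.one_mul]
    rfl
  · simp only [contract, expand, hc, hcb, dif_pos, dif_neg, not_false_eq_true]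
    rfl

theorem contract_invAct (g : Q.GLb β) (W : Q.Rep β) :
    contract b hw huniq (Q.invAct g W) =
      Q̄.invAct (restrictGL b hw huniq g) (contract b hw huniq W) := by
  funext c
  by_cases hc : Q.h c.1 = Q.t b
  · simp only [contract, invAct, restrictGL, dif_pos hc]
    have hcancel : ∀ {m : Type} [Fintype m] (M : Matrix (Fin (β (Q.t b))) m ℂ),
        (g (Q.t b)).val * ((g (Q.t b))⁻¹.val * M) = M := fun M => by
      rw [Matrix.coe_units_inv,
        Matrix.mul_nonsing_inv_cancel_left _ _ (Matrix.isUnits_det_units _)]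
    erw [castRows_conj β (fun x => ((g x)⁻¹ : (Matrix (Fin (β x)) (Fin (β x)) ℂ)ˣ).val) hc,
      ← castRows_conj β (fun x => ((g x)⁻¹ : (Matrix (Fin (β x)) (Fin (β x)) ℂ)ˣ).val)
        (removeVertex_h_of_eq (c := c) hc).symm]
    congr 1
    simp only [Matrix.mul_assoc, hcancel]
    erw [Matrix.mul_assoc, Matrix.mul_assoc]
    rfl
  · simp only [contract, invAct, restrictGL, dif_neg hc]
    erw [castRows_conj β (fun x => ((g x)⁻¹ : (Matrix (Fin (β x)) (Fin (β x)) ℂ)ˣ).val)]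
    rfl

theorem expand_contract_of_eq {W : Q.Rep β} (hW : W b = E) :
    expand b hw huniq E F (contract b hw huniq W) = leftMulAt (Q.t b) (F * E) W := by
  funext a
  by_cases hab : a = b
  · subst hab
    simp [expand_self, leftMulAt, hw, hW]
  by_cases ha : Q.h a = Q.t b
  · simp only [expand, contract, leftMulAt, dif_neg hab, dif_pos ha]
    erw [castRows_castRows, castRows_rfl, hW, ← Matrix.mul_assoc]
    have hmove : ∀ x (e : Q.t b = x) (M : Matrix (Fin (β (Q.t b))) (Fin (β (Q.t a))) ℂ),
        castRows β e (F * E * M) =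
          Function.update (fun x => (1 : Matrix (Fin (β x)) (Fin (β x)) ℂ)) (Q.t b) (F * E) x *
            castRows β e M := by
      rintro x rfl M
      simp
    rw [hmove, castRows_castRows, castRows_rfl]
  · simp only [expand, contract, leftMulAt, dif_neg hab, dif_neg ha, Function.update_of_ne ha,
      Matrix.one_mul]
    rfl

theorem isPolyFun_contract_apply (c : Q̄.A) (i : Fin (β ((Q̄).h c).1))
    (j : Fin (β ((Q̄).t c).1)) :
    Q.IsPolyFun fun W : Q.Rep β => contract b hw huniq W c i j := by
  by_cases hc : Q.h c.1 = Q.t b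
  · simp only [contract, dif_pos hc]
    show Q.IsPolyFun fun W => ∑ k, W b (Fin.cast _ i) k * W c.1 (Fin.cast _ k) j
    exact IsPolyFun.sum fun k => (isPolyFun_apply _ _ _).mul (isPolyFun_apply _ _ _)
  · simp only [contract, dif_neg hc]
    exact isPolyFun_apply c.1 (Fin.cast _ i) j

theorem isPolyFun_expand_apply (a : Q.A) (i : Fin (β (Q.h a))) (j : Fin (β (Q.t a))) :
    Q̄.IsPolyFun fun X => expand b hw huniq E F X a i j := by
  by_cases hab : a = b
  · simp only [expand, dif_pos hab]
    exact isPolyFun_const _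
  by_cases ha : Q.h a = Q.t b
  · simp only [expand, dif_neg hab, dif_pos ha]
    show Q̄.IsPolyFun fun X : Q̄.Rep (fun x => β x.val) =>
      ∑ k, F (Fin.cast _ i) k * X ⟨a, hab⟩ (Fin.cast _ k) j
    exact IsPolyFun.sum fun k => (isPolyFun_const _).mul (isPolyFun_apply _ _ _)
  · simp only [expand, dif_neg hab, dif_neg ha]
    exact isPolyFun_apply (β := fun x : Q̄.V => β x.val) (⟨a, hab⟩ : Q̄.A) (Fin.cast _ i) j

theorem apply_expand_contract_of_isUnit (hEF : E * F = 1) (hσ : σ (Q.t b) = 0)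
    {f : Q.Rep β → ℂ} (hf : f ∈ Q.SIw β σ) {W : Q.Rep β} (hW : IsUnit (W b * F).det) :
    f (expand b hw huniq E F (contract b hw huniq W)) = f W := by
  obtain ⟨u, hu⟩ := Matrix.exists_mul_units_eq hEF hW
  set W' := Q.invAct (unitAt (Q.t b) u) W
  have hW'b : W' b = E := by simp [W', invAct, unitAt, hw, hu]
  have hFE : IsIdempotentElem (F * E) := by
    rw [IsIdempotentElem, Matrix.mul_assoc, ← Matrix.mul_assoc E, hEF, Matrix.one_mul]
  calc f (expand b hw huniq E F (contract b hw huniq W))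
      = f (expand b hw huniq E F (contract b hw huniq W')) := by
        rw [contract_invAct, restrictGL_unitAt, invAct_one]
    _ = f (leftMulAt (Q.t b) (F * E) W') := by rw [expand_contract_of_eq b hw huniq E F hW'b]
    _ = f W' := apply_leftMulAt_of_isIdempotentElem b hw huniq hσ hf hFE
        (by rw [hW'b, ← Matrix.mul_assoc, hEF, Matrix.one_mul])
    _ = f W := by rw [(mem_SIw.1 hf).2, detWeight_unitAt, hσ, zpow_zero, one_mul]

theorem apply_expand_contract (hEF : E * F = 1) (hσ : σ (Q.t b) = 0) {f : Q.Rep β → ℂ}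
    (hf : f ∈ Q.SIw β σ) (W : Q.Rep β) :
    f (expand b hw huniq E F (contract b hw huniq W)) = f W := by
  have hpoly := (mem_SIw.1 hf).1
  have hdet : Q.IsPolyFun fun W : Q.Rep β => (W b * F).det := IsPolyFun.det fun i j =>
    show Q.IsPolyFun fun W : Q.Rep β => ∑ k, W b i k * F k j from
      IsPolyFun.sum fun k => (isPolyFun_apply _ _ _).mul (isPolyFun_const _)
  refine congrFun (IsPolyFun.eq_of_forall_ne_zero
    ((hpoly.comp (isPolyFun_expand_apply b hw huniq E F)).comp
      (isPolyFun_contract_apply b hw huniq)) hpoly hdet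
    (W₀ := expand b hw huniq E F fun _ => 0) ?_
    fun W hW => apply_expand_contract_of_isUnit b hw huniq E F hEF hσ hf hW.isUnit) W
  erw [expand_self, hEF, Matrix.det_one]
  exact one_ne_zero

theorem comp_contract_mem_SIw (hσ : σ (Q.t b) = 0) {f : Q̄.Rep (fun x => β x.val) → ℂ}
    (hf : f ∈ Q̄.SIw (fun x => β x.val) (fun x => σ x.val)) :
    f ∘ contract b hw huniq ∈ Q.SIw β σ := by
  obtain ⟨hpoly, hinv⟩ := mem_SIw.1 hf
  refine mem_SIw.2 ⟨hpoly.comp (isPolyFun_contract_apply b hw huniq), fun g W => ?_⟩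
  simp only [Function.comp_apply, contract_invAct, hinv, detWeight_restrictGL b hw huniq hσ]

theorem comp_expand_mem_SIw (hEF : E * F = 1) (hσ : σ (Q.t b) = 0) {f : Q.Rep β → ℂ}
    (hf : f ∈ Q.SIw β σ) :
    f ∘ expand b hw huniq E F ∈ Q̄.SIw (fun x => β x.val) (fun x => σ x.val) := by
  obtain ⟨hpoly, hinv⟩ := mem_SIw.1 hf
  refine mem_SIw.2 ⟨hpoly.comp (isPolyFun_expand_apply b hw huniq E F), fun g X => ?_⟩
  have hX : Q̄.invAct g X = contract b hw huniq
      (Q.invAct (extendGL b hw huniq g) (expand b hw huniq E F X)) := by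
    rw [contract_invAct, restrictGL_extendGL, contract_expand b hw huniq E F hEF]
  rw [Function.comp_apply, hX, apply_expand_contract b hw huniq E F hEF hσ hf, hinv,
    ← detWeight_restrictGL b hw huniq hσ, restrictGL_extendGL]
  rfl

noncomputable def siwEquiv (hEF : E * F = 1) (hσ : σ (Q.t b) = 0) :
    Q.SIw β σ ≃ₗ[ℂ] Q̄.SIw (fun x => β x.val) (fun x => σ x.val) :=
  LinearEquiv.ofLinearMap
    ((LinearMap.funLeft ℂ ℂ (expand b hw huniq E F)).restrict
      fun _ hf => comp_expand_mem_SIw b hw huniq E F hEF hσ hf)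
    ((LinearMap.funLeft ℂ ℂ (contract b hw huniq)).restrict
      fun _ hf => comp_contract_mem_SIw b hw huniq hσ hf)
    (by ext f X; simp [LinearMap.funLeft, contract_expand b hw huniq E F hEF])
    (by ext f W; exact apply_expand_contract b hw huniq E F hEF hσ f.2 W)

end RemoveVertex

end FinQuiver

theorem siw_remove_zero_weight_vertex_general
    (Q : FinQuiver)
    (v₀ w : Q.V) (b : Q.A)
    (hbt : Q.t b = v₀) (hbh : Q.h b = w) (hw : w ≠ v₀)
    (huniq : ∀ c : Q.A, Q.t c = v₀ → c = b)
    (β : Q.V → ℕ) (σ : Q.V → ℤ)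
    (hβ : β w ≤ β v₀) (hσ : σ v₀ = 0) :
    Nonempty ((Q.SIw β σ) ≃ₗ[ℂ]
      ((Q.removeVertex v₀ w b hw huniq).SIw
        (fun x => β x.val) (fun x => σ x.val))) := by
  subst hbt hbh
  have hEF : (1 : Matrix (Fin (β (Q.t b))) (Fin (β (Q.t b))) ℂ).submatrix (Fin.castLE hβ) id *
      (1 : Matrix (Fin (β (Q.t b))) (Fin (β (Q.t b))) ℂ).submatrix id (Fin.castLE hβ) = 1 := by
    rw [← Matrix.submatrix_mul _ _ _ _ _ Function.bijective_id, Matrix.one_mul,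
      Matrix.submatrix_one _ (Fin.castLE_injective hβ)]
  exact ⟨FinQuiver.siwEquiv b hw huniq _ _ hEF hσ⟩

/-- removing a vertex of zero weight. If the arrows at `v₀` are exactly
the incoming arrows `a₁ : v₁ → v₀, …, a_ℓ : v_ℓ → v₀` together with one outgoing arrow
`b : v₀ → w`, and if `β(v₀) ≥ β(w)` and `σ(v₀) = 0`, then
`SI(Q,β)_σ ≅ SI(Q̄, β̄)_{σ̄}` as `ℂ`-vector spaces. -/
theorem siw_remove_zero_weight_vertex
    (Q : FinQuiver) (hconn : Q.Connected) (hacyc : Q.Acyclic)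
    (v₀ w : Q.V) (b : Q.A)
    (hbt : Q.t b = v₀) (hbh : Q.h b = w) (hw : w ≠ v₀)
    (huniq : ∀ c : Q.A, Q.t c = v₀ → c = b)
    (β : Q.V → ℕ) (σ : Q.V → ℤ)
    (hβ : β w ≤ β v₀) (hσ : σ v₀ = 0) :
    Nonempty ((Q.SIw β σ) ≃ₗ[ℂ]
      ((Q.removeVertex v₀ w b hw huniq).SIw
        (fun x => β x.val) (fun x => σ x.val))) :=
  siw_remove_zero_weight_vertex_general Q v₀ w b hbt hbh hw huniq β σ hβ hσ
end
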